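/- The imaginary part of ξ = 8·∑_{n=0}^∞ (1/(2n+1))·(1/(1−2i))^{2n+1} equals π; that is, Im(ξ) = π. -/

import Mathlib

/-!
The series is that of `artanh z = log ((1 + z) / (1 - z)) / 2`, here at `z = 1 / (1 - 2i)`, which
lies in the unit disc. The Cayley transform `(1 + z) / (1 - z)` of this point is `1 + i`, whose
argument is `π / 4`; hence `Im ξ = 8 · (π / 4) / 2 = π`.
-/

open Complex Real

theorem Complex.hasSum_log_one_add_div_one_sub {z : ℂ} (hz : ‖z‖ < 1) :
    HasSum (fun n : ℕ ↦ (1 / (2 * (n : ℂ) + 1)) * z ^ (2 * n + 1))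
      (log ((1 + z) / (1 - z)) / 2) := by
  have hIz : ‖-I * z‖ < 1 := by simpa using hz
  have h := (hasSum_arctan hIz).mul_left I
  have hzI : -I * z * I = z := by linear_combination (-z) * I_sq
  rw [arctan, hzI] at h
  have hterm (n : ℕ) : (1 / (2 * (n : ℂ) + 1)) * z ^ (2 * n + 1)
      = I * ((-1) ^ n * (-I * z) ^ (2 * n + 1) / ↑(2 * n + 1)) := by
    have hI : (-I) ^ (2 * n + 1) = (-1) ^ n * -I := by
      rw [pow_succ, pow_mul, neg_sq, I_sq]
    rw [mul_pow, hI, ← mul_assoc, ← mul_assoc, ← pow_add, ← two_mul, pow_mul, neg_one_sq,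
      one_pow, one_mul]
    push_cast
    linear_combination (z ^ (2 * n + 1) / (2 * n + 1)) * I_sq
  have hsum : log ((1 + z) / (1 - z)) / 2 = I * (-I / 2 * log ((1 + z) / (1 - z))) := by
    linear_combination (log ((1 + z) / (1 - z)) / 2) * I_sq
  simpa only [hterm, hsum] using h

theorem Complex.arg_one_add_I : arg (1 + I) = π / 4 := by
  have hsqrt : ((√2 : ℝ) : ℂ) * ((√2 / 2 : ℝ) : ℂ) = 1 := by
    norm_cast; rw [mul_div_assoc', Real.mul_self_sqrt zero_le_two, div_self two_ne_zero]
  have h : 1 + I = ((√2 : ℝ) : ℂ) * (cos ((π / 4 : ℝ) : ℂ) + sin ((π / 4 : ℝ) : ℂ) * I) := by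
    rw [← ofReal_cos, ← ofReal_sin, Real.cos_pi_div_four, Real.sin_pi_div_four]
    linear_combination (-(1 + I)) * hsqrt
  rw [h, arg_mul_cos_add_sin_mul_I (by positivity)]
  constructor <;> linarith [Real.pi_pos]

theorem norm_one_div_one_sub_two_mul_I_lt_one : ‖1 / (1 - 2 * I)‖ < 1 := by
  rw [one_div, norm_inv]
  refine inv_lt_one_of_one_lt₀ (lt_of_lt_of_le ?_ (abs_im_le_norm _))
  norm_num

theorem one_add_div_one_sub_eq_one_add_I :
    (1 + 1 / (1 - 2 * I)) / (1 - 1 / (1 - 2 * I)) = 1 + I := by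
  have hw : 1 - 2 * I ≠ 0 := by
    intro hc; simpa using congrArg im hc
  have hw_sub_one : 1 - 2 * I - 1 ≠ 0 := by
    intro hc; simpa using congrArg im hc
  rw [div_eq_iff]
  · field_simp
    linear_combination 2 * I_sq
  · rw [one_sub_div hw]; exact div_ne_zero hw_sub_one hw

theorem im_xi_eq_pi :
    (8 * ∑' n : ℕ, (1 / (2 * (n : ℂ) + 1)) * (1 / (1 - 2 * Complex.I)) ^ (2 * n + 1)).im
      = Real.pi := by
  rw [(hasSum_log_one_add_div_one_sub norm_one_div_one_sub_two_mul_I_lt_one).tsum_eq,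
    one_add_div_one_sub_eq_one_add_I]
  simp only [mul_im, re_ofNat, im_ofNat, div_ofNat_im, log_im, arg_one_add_I]
  ring
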